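/- The probability that two uniformly random integers from {1,...,n} are coprime tends to 6/π² as n → ∞, i.e., (1/n²)·#{(i,k) ∈ {1,...,n}² : gcd(i,k) = 1} → 6/π². -/

import Mathlib

/-!
Möbius inversion over the divisors of `gcd i k` counts the coprime pairs in `[1, n]²` as
`∑_{d ≤ n} μ(d) ⌊n/d⌋²`. After dividing by `n²`, the `d`-th term tends to `μ(d)/d²` and is
bounded by `1/d²`, so by dominated convergence the proportion tends to
`∑ μ(d)/d² = 1/ζ(2) = 6/π²`.
-/

open Filter Finset ArithmeticFunction Topology
open scoped ArithmeticFunction.Moebius ArithmeticFunction.zeta LSeries.notation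

theorem ArithmeticFunction.sum_divisors_moebius {R : Type*} [Ring R] (m : ℕ) :
    ∑ d ∈ m.divisors, (μ d : R) = if m = 1 then 1 else 0 := by
  have h := congrArg (· m) (coe_moebius_mul_coe_zeta (R := R))
  simpa only [coe_mul_zeta_apply, one_apply, intCoe_apply] using h

theorem Nat.Icc_one_filter_dvd_card_eq_div (n d : ℕ) : #{x ∈ Icc 1 n | d ∣ x} = n / d :=
  Nat.Ioc_filter_dvd_card_eq_div n d

theorem card_coprime_pairs_eq_sum_moebius {R : Type*} [Ring R] (n : ℕ) :
    (#{p ∈ Icc 1 n ×ˢ Icc 1 n | p.1.gcd p.2 = 1} : R) =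
      ∑ d ∈ Icc 1 n, (μ d : R) * ((n / d : ℕ) : R) ^ 2 := by
  calc (#{p ∈ Icc 1 n ×ˢ Icc 1 n | p.1.gcd p.2 = 1} : R)
      = ∑ p ∈ Icc 1 n ×ˢ Icc 1 n, ∑ d ∈ (p.1.gcd p.2).divisors, (μ d : R) := by
        simp only [sum_divisors_moebius, natCast_card_filter]
    _ = ∑ d ∈ Icc 1 n, ∑ p ∈ Icc 1 n ×ˢ Icc 1 n with d ∣ p.1 ∧ d ∣ p.2, (μ d : R) := by
        refine sum_comm' fun p d => ?_
        simp only [mem_product, mem_Icc, mem_filter, Nat.mem_divisors, Nat.dvd_gcd_iff]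
        constructor
        · rintro ⟨hp, ⟨hd₁, hd₂⟩, -⟩
          exact ⟨⟨hp, hd₁, hd₂⟩, Nat.pos_of_dvd_of_pos hd₁ hp.1.1,
            (Nat.le_of_dvd hp.1.1 hd₁).trans hp.1.2⟩
        · rintro ⟨⟨hp, hd⟩, -⟩
          exact ⟨hp, hd, (Nat.gcd_pos_of_pos_left _ hp.1.1).ne'⟩
    _ = ∑ d ∈ Icc 1 n, (μ d : R) * ((n / d : ℕ) : R) ^ 2 := by
        refine sum_congr rfl fun d _ => ?_
        rw [sum_const, filter_product (d ∣ ·) (d ∣ ·), card_product,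
          Nat.Icc_one_filter_dvd_card_eq_div, nsmul_eq_mul, ← sq, Nat.cast_comm, Nat.cast_pow]

theorem LSeries_moebius_eq_inv_riemannZeta {s : ℂ} (hs : 1 < s.re) :
    L ↗μ s = (riemannZeta s)⁻¹ := by
  refine eq_inv_of_mul_eq_one_right ?_
  rw [← LSeries_zeta_eq_riemannZeta hs]
  exact LSeries_zeta_mul_Lseries_moebius hs

theorem tsum_moebius_div_sq : ∑' d : ℕ, (μ d : ℝ) / d ^ 2 = 6 / Real.pi ^ 2 := by
  apply Complex.ofReal_injective
  have hL := LSeries_moebius_eq_inv_riemannZeta (s := 2) (by norm_num)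
  rw [riemannZeta_two, inv_div, LSeries] at hL
  push_cast [Complex.ofReal_tsum]
  rw [← hL]
  refine tsum_congr fun d => ?_
  rcases eq_or_ne d 0 with rfl | hd
  · simp
  · rw [LSeries.term_of_ne_zero hd]
    norm_cast

theorem tendsto_natCast_div_div_self (d : ℕ) :
    Tendsto (fun n : ℕ => ((n / d : ℕ) : ℝ) / n) atTop (𝓝 (1 / d)) := by
  have := (tendsto_nat_floor_mul_div_atTop (a := (1 / d : ℝ)) (by positivity)).comp
    tendsto_natCast_atTop_atTop
  refine this.congr fun n => ?_
  rw [Function.comp_apply, one_div_mul_eq_div, Nat.floor_div_eq_div]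

theorem natCast_div_div_self_le (n d : ℕ) : ((n / d : ℕ) : ℝ) / n ≤ 1 / d := by
  rcases eq_or_ne n 0 with rfl | hn
  · simp
  calc ((n / d : ℕ) : ℝ) / n ≤ (n / d : ℝ) / n := by gcongr; exact Nat.cast_div_le
    _ = 1 / d := by field_simp

theorem tendsto_sum_moebius_mul_div_sq :
    Tendsto (fun n : ℕ => ∑ d ∈ Icc 1 n, (μ d : ℝ) * (((n / d : ℕ) : ℝ) / n) ^ 2) atTop
      (𝓝 (∑' d : ℕ, (μ d : ℝ) / d ^ 2)) := by
  have h_vanish (n d : ℕ) (hd : d ∉ Icc 1 n) : (μ d : ℝ) * (((n / d : ℕ) : ℝ) / n) ^ 2 = 0 := by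
    rcases Nat.eq_zero_or_pos d with rfl | hd₀
    · simp
    · simp only [mem_Icc, not_and, not_le] at hd
      simp [Nat.div_eq_of_lt (hd hd₀)]
  have h_bound (n d : ℕ) : ‖(μ d : ℝ) * (((n / d : ℕ) : ℝ) / n) ^ 2‖ ≤ 1 / (d : ℝ) ^ 2 := by
    rw [norm_mul, norm_pow, Real.norm_of_nonneg (by positivity : (0 : ℝ) ≤ ((n / d : ℕ) : ℝ) / n),
      ← one_mul (1 / _), ← one_div_pow]
    gcongr ?_ * ?_ ^ 2
    · rw [Real.norm_eq_abs, ← Int.cast_abs]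
      exact_mod_cast abs_moebius_le_one
    · exact natCast_div_div_self_le n d
  have h_lim (d : ℕ) : Tendsto (fun n : ℕ => (μ d : ℝ) * (((n / d : ℕ) : ℝ) / n) ^ 2) atTop
      (𝓝 ((μ d : ℝ) / d ^ 2)) := by
    simpa [div_eq_mul_inv] using ((tendsto_natCast_div_div_self d).pow 2).const_mul (μ d : ℝ)
  refine (tendsto_tsum_of_dominated_convergence (Real.summable_one_div_nat_pow.mpr one_lt_two)
    h_lim (.of_forall h_bound)).congr fun n => ?_
  exact tsum_eq_sum (h_vanish n)

theorem coprime_probability :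
    Tendsto (fun n : ℕ =>
      (((Finset.Icc 1 n ×ˢ Finset.Icc 1 n).filter
          (fun p : ℕ × ℕ => Nat.gcd p.1 p.2 = 1)).card : ℝ) / (n : ℝ) ^ 2)
      atTop (nhds (6 / Real.pi ^ 2)) := by
  rw [← tsum_moebius_div_sq]
  refine tendsto_sum_moebius_mul_div_sq.congr fun n => ?_
  rw [card_coprime_pairs_eq_sum_moebius, sum_div]
  exact sum_congr rfl fun d _ => by ring
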